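/- Let F: L₁(Ω,μ) → ℝ be a functional on a q-measure space satisfying: (i) for 0 ≤ α ≤ β, γ ≥ 0 and disjoint A,B, F(αχ_A + (β+γ)χ_B) = αμ(A) + (β+γ)μ(B) + u(α,β)·I(A,B) for some function u; and additionally F(αχ_{A∪B}) = αμ(A∪B). Then if there exist disjoint A,B with I(A,B) ≠ 0, necessarily u(α,β) = α for all 0 ≤ α ≤ β, i.e., F(αχ_A + βχ_B) = αμ(A) + βμ(B) + α·I(A,B) for all disjoint A,B and 0 ≤ α ≤ β. -/

import Mathlib

open Set

def interference {Ω : Type*} (μ : Set Ω → ℝ) (A B : Set Ω) : ℝ :=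
  μ (A ∪ B) - μ A - μ B

/-- Condition (i). -/
def HasInterferenceWeight {Ω : Type*} [MeasurableSpace Ω] (μ : Set Ω → ℝ)
    (F : (Ω → ℝ) → ℝ) (u : ℝ → ℝ → ℝ) : Prop :=
  ∀ α β γ : ℝ, 0 ≤ α → α ≤ β → 0 ≤ γ →
    ∀ A B : Set Ω, MeasurableSet A → MeasurableSet B → Disjoint A B →
      F (fun ω => α * A.indicator (fun _ => (1 : ℝ)) ω
          + (β + γ) * B.indicator (fun _ => (1 : ℝ)) ω) =
        α * μ A + (β + γ) * μ B + u α β * interference μ A B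

theorem mul_indicator_add_mul_indicator_of_disjoint {Ω : Type*} {A B : Set Ω}
    (hd : Disjoint A B) (α : ℝ) :
    (fun ω => α * A.indicator (fun _ => (1 : ℝ)) ω + α * B.indicator (fun _ => (1 : ℝ)) ω) =
      fun ω => α * (A ∪ B).indicator (fun _ => (1 : ℝ)) ω := by
  funext ω
  rw [indicator_union_of_disjoint hd, mul_add]

section

variable {Ω : Type*} [MeasurableSpace Ω] {μ : Set Ω → ℝ} {F : (Ω → ℝ) → ℝ}
  {u : ℝ → ℝ → ℝ} {A B : Set Ω} {α β : ℝ}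

/-- On the diagonal, `α χ_A + α χ_B = α χ_{A∪B}`, so additivity on unions forces the
correction to be the full `α · I(A,B)`. -/
theorem HasInterferenceWeight.weight_self_eq (hi : HasInterferenceWeight μ F u)
    (hA : MeasurableSet A) (hB : MeasurableSet B) (hd : Disjoint A B)
    (hI : interference μ A B ≠ 0)
    (hunion : F (fun ω => α * (A ∪ B).indicator (fun _ => (1 : ℝ)) ω) = α * μ (A ∪ B))
    (hα : 0 ≤ α) : u α α = α := by
  have h := hi α α 0 hα le_rfl le_rfl A B hA hB hd
  rw [add_zero, mul_indicator_add_mul_indicator_of_disjoint hd, hunion] at h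
  refine mul_right_cancel₀ hI ?_
  unfold interference at h ⊢
  linarith

/-- `α χ_A + β χ_B` is both the case `(α, β, 0)` and the case `(α, α, β - α)` of
condition (i), so `u α β` and `u α α` give the same correction. -/
theorem HasInterferenceWeight.weight_eq_weight_self (hi : HasInterferenceWeight μ F u)
    (hA : MeasurableSet A) (hB : MeasurableSet B) (hd : Disjoint A B)
    (hI : interference μ A B ≠ 0) (hα : 0 ≤ α) (hαβ : α ≤ β) : u α β = u α α := by
  have hβ := hi α β 0 hα hαβ le_rfl A B hA hB hd
  have hαγ := hi α α (β - α) hα le_rfl (sub_nonneg.mpr hαβ) A B hA hB hd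
  rw [add_sub_cancel, ← add_zero β, hβ] at hαγ
  exact mul_right_cancel₀ hI (by linarith)

theorem HasInterferenceWeight.weight_eq (hi : HasInterferenceWeight μ F u)
    (hA : MeasurableSet A) (hB : MeasurableSet B) (hd : Disjoint A B)
    (hI : interference μ A B ≠ 0)
    (hunion : F (fun ω => α * (A ∪ B).indicator (fun _ => (1 : ℝ)) ω) = α * μ (A ∪ B))
    (hα : 0 ≤ α) (hαβ : α ≤ β) : u α β = α :=
  (hi.weight_eq_weight_self hA hB hd hI hα hαβ).trans
    (hi.weight_self_eq hA hB hd hI hunion hα)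

end

theorem stmt_19_general {Ω : Type*} [MeasurableSpace Ω] (μ : Set Ω → ℝ)
    (F : (Ω → ℝ) → ℝ) (u : ℝ → ℝ → ℝ)
    (hi : ∀ (α β γ : ℝ), 0 ≤ α → α ≤ β → 0 ≤ γ →
      ∀ A B : Set Ω, MeasurableSet A → MeasurableSet B → Disjoint A B →
      F (fun ω => α * A.indicator (fun _ => (1 : ℝ)) ω
          + (β + γ) * B.indicator (fun _ => (1 : ℝ)) ω) =
        α * μ A + (β + γ) * μ B + u α β * (μ (A ∪ B) - μ A - μ B))
    (hind : ∀ (α : ℝ), 0 ≤ α → ∀ A B : Set Ω, MeasurableSet A → MeasurableSet B →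
      Disjoint A B →
      F (fun ω => α * (A ∪ B).indicator (fun _ => (1 : ℝ)) ω) = α * μ (A ∪ B))
    (hex : ∃ A B : Set Ω, MeasurableSet A ∧ MeasurableSet B ∧ Disjoint A B ∧
      μ (A ∪ B) - μ A - μ B ≠ 0) :
    (∀ α β : ℝ, 0 ≤ α → α ≤ β → u α β = α) ∧
      ∀ A B : Set Ω, MeasurableSet A → MeasurableSet B → Disjoint A B →
        ∀ α β : ℝ, 0 ≤ α → α ≤ β →
          F (fun ω => α * A.indicator (fun _ => (1 : ℝ)) ω
              + β * B.indicator (fun _ => (1 : ℝ)) ω) =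
            α * μ A + β * μ B + α * (μ (A ∪ B) - μ A - μ B) := by
  obtain ⟨A₀, B₀, hA₀, hB₀, hd₀, hI₀⟩ := hex
  have hu : ∀ α β : ℝ, 0 ≤ α → α ≤ β → u α β = α := fun α β hα hαβ =>
    HasInterferenceWeight.weight_eq hi hA₀ hB₀ hd₀ hI₀ (hind α hα A₀ B₀ hA₀ hB₀ hd₀) hα hαβ
  refine ⟨hu, fun A B hA hB hd α β hα hαβ => ?_⟩
  simpa [hu α β hα hαβ] using hi α β 0 hα hαβ le_rfl A B hA hB hd

/-- Uniqueness step for the quantum integral: if `F` satisfies condition (i) with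
weight function `u` and `F(αχ_{A∪B}) = α μ(A∪B)`, and some disjoint pair has
nonzero interference, then `u(α,β) = α` for all `0 ≤ α ≤ β`, i.e.
`F(αχ_A + βχ_B) = αμ(A) + βμ(B) + α·I(A,B)`. -/
theorem stmt_19 {Ω : Type*} [MeasurableSpace Ω] (μ : Set Ω → ℝ)
    (hnonneg : ∀ A, MeasurableSet A → 0 ≤ μ A)
    (hempty : μ ∅ = 0)
    (hgrade2 : ∀ A B C : Set Ω, MeasurableSet A → MeasurableSet B → MeasurableSet C →
      Disjoint A B → Disjoint A C → Disjoint B C →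
      μ (A ∪ B ∪ C) = μ (A ∪ B) + μ (A ∪ C) + μ (B ∪ C) - μ A - μ B - μ C)
    (hcontMono : ∀ A : ℕ → Set Ω, (∀ n, MeasurableSet (A n)) → Monotone A →
      Filter.Tendsto (fun n => μ (A n)) Filter.atTop (nhds (μ (⋃ n, A n))))
    (hcontAnti : ∀ A : ℕ → Set Ω, (∀ n, MeasurableSet (A n)) → Antitone A →
      Filter.Tendsto (fun n => μ (A n)) Filter.atTop (nhds (μ (⋂ n, A n))))
    (F : (Ω → ℝ) → ℝ) (u : ℝ → ℝ → ℝ)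
    (hi : ∀ (α β γ : ℝ), 0 ≤ α → α ≤ β → 0 ≤ γ →
      ∀ A B : Set Ω, MeasurableSet A → MeasurableSet B → Disjoint A B →
      F (fun ω => α * A.indicator (fun _ => (1 : ℝ)) ω
          + (β + γ) * B.indicator (fun _ => (1 : ℝ)) ω) =
        α * μ A + (β + γ) * μ B + u α β * (μ (A ∪ B) - μ A - μ B))
    (hind : ∀ (α : ℝ), 0 ≤ α → ∀ A B : Set Ω, MeasurableSet A → MeasurableSet B →
      Disjoint A B →
      F (fun ω => α * (A ∪ B).indicator (fun _ => (1 : ℝ)) ω) = α * μ (A ∪ B))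
    (hex : ∃ A B : Set Ω, MeasurableSet A ∧ MeasurableSet B ∧ Disjoint A B ∧
      μ (A ∪ B) - μ A - μ B ≠ 0) :
    (∀ α β : ℝ, 0 ≤ α → α ≤ β → u α β = α) ∧
      ∀ A B : Set Ω, MeasurableSet A → MeasurableSet B → Disjoint A B →
        ∀ α β : ℝ, 0 ≤ α → α ≤ β →
          F (fun ω => α * A.indicator (fun _ => (1 : ℝ)) ω
              + β * B.indicator (fun _ => (1 : ℝ)) ω) =
            α * μ A + β * μ B + α * (μ (A ∪ B) - μ A - μ B) :=
  stmt_19_general μ F u hi hind hex
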